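/- Let F be a field with char(F) ≠ 2, G a non-abelian group with non-trivial orientation σ and involution *, FG normal with respect to ⊛, and N = ker(σ) an SLC-group with unique non-identity commutator s. Then there exists g₀ ∈ G \ N that centralizes N, satisfies g₀* = sg₀, and is central in G. -/

import Mathlib

/-!
Applying normality to `x + y` gives `σ(y) x y* + σ(x) y x* = σ(y) y* x + σ(x) x* y` in `FG`; since
`char F ≠ 2`, comparing supports leaves only a few possible coincidences among these four group
elements.

Let `N = ker σ` and fix `m, n ∈ N` with commutator `s`. Any `g ∉ N` has `g* = c g` with `c ∈ N`;
`g g* = g* g` makes `c` commute with `g`, whence `c* = c⁻¹` and so `c² ∈ {1, s}`. Comparing `g`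
with `m`, `n` and `n g` produces some `h ∉ N` with `h* ∈ {h, s h}`; if `h* = h`, comparing it with
`m`, `n` and `m n` produces one with `h* = s h`. Such an `h` commutes with `s`, and comparing it
with `x ∈ N` (or with `x h` when `x` is central in `N`) shows that it centralizes `N`; since `N`
has index two, `h` is central in `G`.
-/
/-- The oriented involution on the group algebra: `(Σ α_g g)⊛ = Σ α_g σ(g) g*`. -/
noncomputable def oinvMap {F G : Type*} [Field F] [Group G] (st : G → G) (σ : G → F) :
    MonoidAlgebra F G → MonoidAlgebra F G :=
  fun α => Finsupp.sum α.coeff fun g c => MonoidAlgebra.single (st g) (σ g * c)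

section Normal

open MonoidAlgebra

variable {F G : Type*} [Field F] [Group G] {st : G → G} {σ : G → F}

theorem oinvMap_single (g : G) (c : F) :
    oinvMap st σ (single g c) = single (st g) (σ g * c) := by
  simp [oinvMap, coeff_single]

theorem oinvMap_add (α β : MonoidAlgebra F G) :
    oinvMap st σ (α + β) = oinvMap st σ α + oinvMap st σ β := by
  classical
  unfold oinvMap
  rw [coeff_add]
  apply Finsupp.sum_add_index <;> simp [mul_add, single_add]

theorem single_mul_st_self_of_normal
    (hnormal : ∀ α : MonoidAlgebra F G, α * oinvMap st σ α = oinvMap st σ α * α) (x : G) :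
    (single (x * st x) (σ x) : MonoidAlgebra F G) = single (st x * x) (σ x) := by
  simpa [oinvMap_single, single_mul_single] using hnormal (single x 1)

theorem mul_st_self_comm_of_normal
    (hnormal : ∀ α : MonoidAlgebra F G, α * oinvMap st σ α = oinvMap st σ α * α)
    {x : G} (hx : σ x ≠ 0) : x * st x = st x * x :=
  (single_left_inj hx).1 (single_mul_st_self_of_normal hnormal x)

theorem single_mul_st_add_of_normal
    (hnormal : ∀ α : MonoidAlgebra F G, α * oinvMap st σ α = oinvMap st σ α * α) (x y : G) :
    (single (x * st y) (σ y) + single (y * st x) (σ x) : MonoidAlgebra F G) =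
      single (st y * x) (σ y) + single (st x * y) (σ x) := by
  have e := hnormal (single x 1 + single y 1)
  simp only [oinvMap_add, oinvMap_single, add_mul, mul_add, single_mul_single, one_mul,
    mul_one] at e
  linear_combination (norm := abel1) e - single_mul_st_self_of_normal hnormal x -
    single_mul_st_self_of_normal hnormal y

theorem mul_st_cases_of_normal
    (hnormal : ∀ α : MonoidAlgebra F G, α * oinvMap st σ α = oinvMap st σ α * α)
    {x y : G} (hx : σ x ≠ 0) (hy : σ y ≠ 0) :
    (x * st y = st y * x ∧ y * st x = st x * y) ∨
      (σ y = σ x ∧ x * st y = st x * y ∧ y * st x = st y * x) ∨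
      (σ y + σ x = 0 ∧ x * st y = y * st x ∧ st y * x = st x * y) :=
  (single_add_single_inj hy hx).1 (single_mul_st_add_of_normal hnormal x y)

end Normal

section Orientation

variable {F G : Type*} [Field F] {σ : G → F}

theorem orientation_mul_self (hval : ∀ g : G, σ g = 1 ∨ σ g = -1) (g : G) :
    σ g * σ g = 1 := by
  rcases hval g with h | h <;> simp [h]

theorem orientation_eq_of_mul_eq_one (hval : ∀ g : G, σ g = 1 ∨ σ g = -1) {a b : G}
    (h : σ a * σ b = 1) : σ b = σ a := by
  rw [← one_mul (σ b), ← orientation_mul_self hval a, mul_assoc, h, mul_one]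

variable [Group G]

theorem orientation_one (hhom : ∀ g h : G, σ (g * h) = σ g * σ h)
    (hval : ∀ g : G, σ g = 1 ∨ σ g = -1) : σ 1 = 1 := by
  rw [← orientation_mul_self hval 1, ← hhom, mul_one]

theorem orientation_inv (hhom : ∀ g h : G, σ (g * h) = σ g * σ h)
    (hval : ∀ g : G, σ g = 1 ∨ σ g = -1) (g : G) : σ g⁻¹ = σ g :=
  orientation_eq_of_mul_eq_one hval (by rw [← hhom, mul_inv_cancel, orientation_one hhom hval])

theorem mem_center_of_commute_ker (hhom : ∀ g h : G, σ (g * h) = σ g * σ h)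
    (hval : ∀ g : G, σ g = 1 ∨ σ g = -1) {g : G} (hg : σ g = -1)
    (hcomm : ∀ n : G, σ n = 1 → g * n = n * g) : g ∈ Subgroup.center G := by
  refine Subgroup.mem_center_iff.2 fun y => ?_
  rcases hval y with hy | hy
  · exact (hcomm y hy).symm
  · have h := hcomm (y * g⁻¹) <| by
      rw [hhom, orientation_inv hhom hval, hy, hg, neg_mul_neg, mul_one]
    rw [inv_mul_cancel_right] at h
    calc y * g = g * (y * g⁻¹) * g := by rw [h]
      _ = g * y := by group

end Orientation

theorem mul_eq_mul_mul_of_inv_mul_inv_mul_mul_eq {G : Type*} [Group G] {a b c : G}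
    (h : a⁻¹ * b⁻¹ * a * b = c) : a * b = b * a * c := by
  rw [← h]; group

/-- `N = ker σ`; the last two fields say that `st` restricts to the canonical involution of the
SLC-group `N`, whose commutator subgroup is `{1, s}`. -/
structure NormalSLCOrientation {F G : Type*} [Field F] [Group G] (st : G → G) (σ : G → F)
    (s : G) : Prop where
  two_ne_zero : (2 : F) ≠ 0
  st_mul : ∀ g h : G, st (g * h) = st h * st g
  st_st : ∀ g : G, st (st g) = g
  map_mul : ∀ g h : G, σ (g * h) = σ g * σ h
  eq_one_or : ∀ g : G, σ g = 1 ∨ σ g = -1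
  mul_st : ∀ g : G, σ (g * st g) = 1
  normal : ∀ α : MonoidAlgebra F G, α * oinvMap st σ α = oinvMap st σ α * α
  s_mem : σ s = 1
  s_ne_one : s ≠ 1
  s_mul_s : s * s = 1
  commutator : ∀ m n : G, σ m = 1 → σ n = 1 → m⁻¹ * n⁻¹ * m * n = 1 ∨ m⁻¹ * n⁻¹ * m * n = s
  exists_commutator : ∃ m n : G, σ m = 1 ∧ σ n = 1 ∧ m⁻¹ * n⁻¹ * m * n = s
  st_of_central : ∀ n : G, σ n = 1 → (∀ k : G, σ k = 1 → n * k = k * n) → st n = n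
  st_of_not_central : ∀ n : G, σ n = 1 → (¬ ∀ k : G, σ k = 1 → n * k = k * n) → st n = s * n

namespace NormalSLCOrientation

variable {F G : Type*} [Field F] [Group G] {st : G → G} {σ : G → F} {s : G}

theorem one_ne_neg_one (H : NormalSLCOrientation st σ s) : (1 : F) ≠ -1 :=
  fun h => H.two_ne_zero (by linear_combination h)

theorem ne_zero (H : NormalSLCOrientation st σ s) (g : G) : σ g ≠ 0 := by
  rcases H.eq_one_or g with h | h <;> simp [h]

theorem map_st (H : NormalSLCOrientation st σ s) (g : G) : σ (st g) = σ g :=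
  orientation_eq_of_mul_eq_one H.eq_one_or (by rw [← H.map_mul, H.mul_st])

theorem map_mul_of_mem (H : NormalSLCOrientation st σ s) {x g : G} (hx : σ x = 1) :
    σ (x * g) = σ g := by
  rw [H.map_mul, hx, one_mul]

theorem cases_mem_not_mem (H : NormalSLCOrientation st σ s) {x g : G} (hx : σ x = 1)
    (hg : σ g = -1) :
    (x * st g = st g * x ∧ g * st x = st x * g) ∨
      (x * st g = g * st x ∧ st g * x = st x * g) := by
  rcases mul_st_cases_of_normal H.normal (H.ne_zero x) (H.ne_zero g) with h | ⟨h, -⟩ | ⟨-, h⟩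
  · exact Or.inl h
  · exact absurd (hg.symm.trans (h.trans hx)).symm H.one_ne_neg_one
  · exact Or.inr h

theorem cases_not_mem_not_mem (H : NormalSLCOrientation st σ s) {x y : G} (hx : σ x = -1)
    (hy : σ y = -1) :
    (x * st y = st y * x ∧ y * st x = st x * y) ∨
      (x * st y = st x * y ∧ y * st x = st y * x) := by
  rcases mul_st_cases_of_normal H.normal (H.ne_zero x) (H.ne_zero y) with h | ⟨-, h⟩ | ⟨h, -⟩
  · exact Or.inl h
  · exact Or.inr h
  · exact absurd (by linear_combination -h + hx + hy) H.two_ne_zero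

theorem s_comm (H : NormalSLCOrientation st σ s) {k : G} (hk : σ k = 1) : s * k = k * s := by
  rcases H.commutator k s hk H.s_mem with h | h
  · exact (by simpa using mul_eq_mul_mul_of_inv_mul_inv_mul_mul_eq h : k * s = s * k).symm
  · have h := mul_right_cancel (mul_eq_mul_mul_of_inv_mul_inv_mul_mul_eq h)
    exact absurd (mul_eq_right.1 h.symm) H.s_ne_one

theorem st_s (H : NormalSLCOrientation st σ s) : st s = s :=
  H.st_of_central s H.s_mem fun _ hk => H.s_comm hk

theorem exists_noncentral_pair (H : NormalSLCOrientation st σ s) :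
    ∃ m n : G, σ m = 1 ∧ σ n = 1 ∧ st m = s * m ∧ st n = s * n ∧ n * m = s * (m * n) := by
  obtain ⟨m, n, hm, hn, hmn⟩ := H.exists_commutator
  have hmn : m * n = n * m * s := mul_eq_mul_mul_of_inv_mul_inv_mul_mul_eq hmn
  have hne : m * n ≠ n * m := fun h => H.s_ne_one (mul_eq_left.1 (hmn.symm.trans h))
  refine ⟨m, n, hm, hn, H.st_of_not_central m hm fun hc => hne (hc n hn),
    H.st_of_not_central n hn fun hc => hne (hc m hm).symm, ?_⟩
  rw [hmn, ← H.s_comm (by rw [H.map_mul_of_mem hn, hm]), ← mul_assoc, H.s_mul_s, one_mul]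

theorem s_mul_comm_of_st_eq (H : NormalSLCOrientation st σ s) {g : G} (hst : st g = s * g) :
    s * g = g * s := by
  have h := H.st_st g
  rw [hst, H.st_mul, hst, H.st_s] at h
  calc s * g = s * g * s * s := by rw [mul_assoc _ s, H.s_mul_s, mul_one]
    _ = g * s := by rw [h]

theorem commute_of_st_eq (H : NormalSLCOrientation st σ s) {g : G} (hg : σ g = -1)
    (hst : st g = s * g) {x : G} (hx : σ x = 1) : g * x = x * g := by
  by_cases hc : ∀ k : G, σ k = 1 → x * k = k * x
  · have hstxg : st (x * g) = s * g * x := by rw [H.st_mul, hst, H.st_of_central x hx hc]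
    have key : g * (s * g * x) = s * g * (x * g) := by
      rcases H.cases_not_mem_not_mem hg (by rw [H.map_mul_of_mem hx, hg]) with ⟨h, -⟩ | ⟨h, -⟩
      · rwa [hstxg, mul_assoc (s * g) x g] at h
      · rwa [hstxg, hst] at h
    rw [← mul_assoc, ← mul_assoc, ← H.s_mul_comm_of_st_eq hst, mul_assoc (s * g)] at key
    exact mul_left_cancel key
  · have hstx := H.st_of_not_central x hx hc
    have key : s * g * x = s * x * g := by
      rcases H.cases_mem_not_mem hx hg with ⟨h, -⟩ | ⟨-, h⟩
      · rwa [hst, ← mul_assoc, ← H.s_comm hx, eq_comm] at h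
      · rwa [hst, hstx] at h
    simp only [mul_assoc] at key
    exact mul_left_cancel key

theorem exists_st_eq_s_mul_of_st_eq_self (H : NormalSLCOrientation st σ s) {g : G}
    (hg : σ g = -1) (hst : st g = g) : ∃ h : G, σ h = -1 ∧ st h = s * h := by
  obtain ⟨m, n, hm, hn, hstm, hstn, hnm⟩ := H.exists_noncentral_pair
  have of_comm : ∀ x : G, σ x = 1 → st x = s * x → g * st x = st x * g →
      ∃ h : G, σ h = -1 ∧ st h = s * h := fun x hx hstx hc =>
    ⟨x * g, by rw [H.map_mul_of_mem hx, hg], by rw [H.st_mul, hst, hc, hstx, mul_assoc]⟩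
  have hmn : σ (m * n) = 1 := by rw [H.map_mul_of_mem hm, hn]
  have hstmn : st (m * n) = s * (m * n) := by
    rw [H.st_mul, hstm, hstn, mul_assoc, ← mul_assoc n, ← H.s_comm hn, mul_assoc,
      ← mul_assoc, H.s_mul_s, one_mul, hnm]
  rcases H.cases_mem_not_mem hm hg with ⟨-, hcm⟩ | ⟨hcm, -⟩
  · exact of_comm m hm hstm hcm
  rcases H.cases_mem_not_mem hn hg with ⟨-, hcn⟩ | ⟨-, hcn⟩
  · exact of_comm n hn hstn hcn
  rcases H.cases_mem_not_mem hmn hg with ⟨-, hc⟩ | ⟨hc, -⟩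
  · exact of_comm _ hmn hstmn hc
  rw [hst, hstm] at hcm
  rw [hst, hstn] at hcn
  rw [hst, hstmn] at hc
  have key : s * (m * n * g) = m * n * g :=
    calc s * (m * n * g) = m * (s * n * g) := by
          rw [← mul_assoc, ← mul_assoc, H.s_comm hm]; simp only [mul_assoc]
      _ = g * (s * (m * n)) := by rw [← hcn, ← mul_assoc, hcm]; simp only [mul_assoc]
      _ = m * n * g := hc.symm
  exact absurd (mul_eq_right.1 key) H.s_ne_one

theorem exists_st_eq_mul (H : NormalSLCOrientation st σ s) {g : G} (hg : σ g = -1) :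
    ∃ c : G, σ c = 1 ∧ st g = c * g ∧ st c = c⁻¹ := by
  set c := st g * g⁻¹
  have hstg : st g = c * g := by rw [inv_mul_cancel_right]
  refine ⟨c, ?_, hstg, ?_⟩
  · rw [H.map_mul, H.map_st, orientation_inv H.map_mul H.eq_one_or, hg, neg_mul_neg, mul_one]
  have hgc : g * c = c * g := by
    have h := mul_st_self_comm_of_normal H.normal (H.ne_zero g)
    rw [hstg, ← mul_assoc] at h
    exact mul_right_cancel h
  refine eq_inv_of_mul_eq_one_right (mul_left_cancel (a := g) ?_)
  have h := H.st_st g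
  rw [hstg, H.st_mul, hstg, ← hgc, mul_assoc] at h
  rw [h, mul_one]

theorem mul_self_eq_one_or_s (H : NormalSLCOrientation st σ s) {c : G} (hc : σ c = 1)
    (hst : st c = c⁻¹) : c * c = 1 ∨ c * c = s := by
  by_cases hcen : ∀ k : G, σ k = 1 → c * k = k * c
  · have hci : c⁻¹ = c := hst.symm.trans (H.st_of_central c hc hcen)
    left
    nth_rw 2 [← hci]
    exact mul_inv_cancel c
  · right
    have h : s * (c * c) = 1 := by
      rw [← mul_assoc, H.s_comm hc, mul_assoc, ← H.st_of_not_central c hc hcen, hst,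
        mul_inv_cancel]
    rw [eq_inv_of_mul_eq_one_right h, inv_eq_of_mul_eq_one_right H.s_mul_s]

theorem st_mul_eq_of_mul_st_eq (H : NormalSLCOrientation st σ s) {g c x : G} (hc : σ c = 1)
    (hstg : st g = c * g) (hcc : c * c = 1 ∨ c * c = s) (hx : σ x = 1) (h : x * st g = g * st x) :
    st (x * g) = s * (x * g) ∨ st (x * g) = x * g := by
  have e : st (x * g) = c * (x * c) * g := by
    rw [H.st_mul, hstg, mul_assoc, ← h, hstg]; simp only [mul_assoc]
  rcases H.commutator x c hx hc with ht | ht <;>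
    rw [e, mul_eq_mul_mul_of_inv_mul_inv_mul_mul_eq ht] <;>
    rcases hcc with hu | hu <;> simp only [← mul_assoc, hu, mul_one, one_mul, or_true, true_or]
  · exact Or.inl (by rw [H.s_comm hx])
  · exact Or.inr (by rw [H.s_comm hx, mul_assoc x, H.s_mul_s, mul_one])

theorem exists_st_eq_s_mul_or_st_eq_self (H : NormalSLCOrientation st σ s) {g : G}
    (hg : σ g = -1) : ∃ h : G, σ h = -1 ∧ (st h = s * h ∨ st h = h) := by
  obtain ⟨c, hc, hstg, hstc⟩ := H.exists_st_eq_mul hg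
  have hcc := H.mul_self_eq_one_or_s hc hstc
  obtain ⟨m, n, hm, hn, hstm, hstn, hnm⟩ := H.exists_noncentral_pair
  have of_twisted : ∀ x : G, σ x = 1 → x * st g = g * st x →
      ∃ h : G, σ h = -1 ∧ (st h = s * h ∨ st h = h) := fun x hx h =>
    ⟨x * g, by rw [H.map_mul_of_mem hx, hg], H.st_mul_eq_of_mul_st_eq hc hstg hcc hx h⟩
  rcases H.cases_mem_not_mem hm hg with ⟨-, hgm⟩ | ⟨h, -⟩
  swap
  · exact of_twisted m hm h
  rcases H.cases_mem_not_mem hn hg with ⟨-, hgn⟩ | ⟨h, -⟩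
  swap
  · exact of_twisted n hn h
  rw [hstm] at hgm
  rw [hstn] at hgn
  have hng : σ (n * g) = -1 := by rw [H.map_mul_of_mem hn, hg]
  have hstng : st (n * g) = c * (s * n) * g := by
    rw [H.st_mul, hstg, hstn, mul_assoc c, hgn, ← mul_assoc]
  have hngm : n * g * (s * m) = n * (s * m) * g := by
    rw [mul_assoc, hgm, ← mul_assoc]
  have hnsm : n * (s * m) = m * n := by
    rw [← mul_assoc, ← H.s_comm hn, mul_assoc, hnm, ← mul_assoc, H.s_mul_s, one_mul]
  rcases H.cases_mem_not_mem hm hng with ⟨-, h⟩ | ⟨h, -⟩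
  · rw [hstm, hngm, hnsm, ← mul_assoc (s * m), mul_assoc s m n] at h
    exact absurd (mul_eq_right.1 (mul_right_cancel h).symm) H.s_ne_one
  · rw [hstng, hstm, hngm, hnsm, ← mul_assoc m] at h
    have hcs : c * s = 1 :=
      mul_eq_right.1 (by rw [mul_assoc]; exact mul_left_cancel (mul_right_cancel h))
    refine ⟨g, hg, Or.inl ?_⟩
    rw [hstg, eq_inv_of_mul_eq_one_left hcs, inv_eq_of_mul_eq_one_right H.s_mul_s]

theorem exists_st_eq_s_mul (H : NormalSLCOrientation st σ s) (hnt : ∃ g : G, σ g = -1) :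
    ∃ h : G, σ h = -1 ∧ st h = s * h := by
  obtain ⟨g, hg⟩ := hnt
  obtain ⟨h, hh, hst | hst⟩ := H.exists_st_eq_s_mul_or_st_eq_self hg
  · exact ⟨h, hh, hst⟩
  · exact H.exists_st_eq_s_mul_of_st_eq_self hh hst

end NormalSLCOrientation

theorem stmt_17_general {F G : Type*} [Field F] [Group G] (h2 : (2 : F) ≠ 0)
    (st : G → G) (hanti : ∀ g h : G, st (g * h) = st h * st g)
    (hinvol : ∀ g : G, st (st g) = g)
    (σ : G → F) (hhom : ∀ g h : G, σ (g * h) = σ g * σ h)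
    (hval : ∀ g : G, σ g = 1 ∨ σ g = -1)
    (hnt : ∃ g : G, σ g = -1)
    (hker : ∀ g : G, σ (g * st g) = 1)
    (hnormal : ∀ α : MonoidAlgebra F G, α * oinvMap st σ α = oinvMap st σ α * α)
    (s : G) (hsN : σ s = 1) (hs1 : s ≠ 1) (hs2 : s * s = 1)
    (hNcomm : ∀ m n : G, σ m = 1 → σ n = 1 →
      (m⁻¹ * n⁻¹ * m * n = 1 ∨ m⁻¹ * n⁻¹ * m * n = s))
    (hNcommS : ∃ m n : G, σ m = 1 ∧ σ n = 1 ∧ m⁻¹ * n⁻¹ * m * n = s)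
    (hcanon : ∀ n : G, σ n = 1 →
      ((∀ k : G, σ k = 1 → n * k = k * n) → st n = n) ∧
      ((¬ ∀ k : G, σ k = 1 → n * k = k * n) → st n = s * n)) :
    ∃ g₀ : G, σ g₀ = -1 ∧ (∀ n : G, σ n = 1 → g₀ * n = n * g₀) ∧
      st g₀ = s * g₀ ∧ g₀ ∈ Subgroup.center G := by
  have H : NormalSLCOrientation st σ s :=
    ⟨h2, hanti, hinvol, hhom, hval, hker, hnormal, hsN, hs1, hs2, hNcomm, hNcommS,
      fun n hn => (hcanon n hn).1, fun n hn => (hcanon n hn).2⟩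
  obtain ⟨g₀, hg₀, hst⟩ := H.exists_st_eq_s_mul hnt
  have hcomm : ∀ n : G, σ n = 1 → g₀ * n = n * g₀ := fun n hn => H.commute_of_st_eq hg₀ hst hn
  exact ⟨g₀, hg₀, hcomm, hst, mem_center_of_commute_ker hhom hval hg₀ hcomm⟩

theorem stmt_17 {F G : Type*} [Field F] [Group G] (h2 : (2 : F) ≠ 0)
    (hna : ∃ g h : G, g * h ≠ h * g)
    (st : G → G) (hanti : ∀ g h : G, st (g * h) = st h * st g)
    (hinvol : ∀ g : G, st (st g) = g)
    (σ : G → F) (hhom : ∀ g h : G, σ (g * h) = σ g * σ h)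
    (hval : ∀ g : G, σ g = 1 ∨ σ g = -1)
    (hnt : ∃ g : G, σ g = -1)
    (hker : ∀ g : G, σ (g * st g) = 1)
    (hnormal : ∀ α : MonoidAlgebra F G, α * oinvMap st σ α = oinvMap st σ α * α)
    (s : G) (hsN : σ s = 1) (hs1 : s ≠ 1) (hs2 : s * s = 1)
    (hNna : ∃ m n : G, σ m = 1 ∧ σ n = 1 ∧ m * n ≠ n * m)
    (hNLC : ∀ m n : G, σ m = 1 → σ n = 1 → (m * n = n * m ↔
      ((∀ k : G, σ k = 1 → m * k = k * m) ∨ (∀ k : G, σ k = 1 → n * k = k * n) ∨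
        (∀ k : G, σ k = 1 → (m * n) * k = k * (m * n)))))
    (hNcomm : ∀ m n : G, σ m = 1 → σ n = 1 →
      (m⁻¹ * n⁻¹ * m * n = 1 ∨ m⁻¹ * n⁻¹ * m * n = s))
    (hNcommS : ∃ m n : G, σ m = 1 ∧ σ n = 1 ∧ m⁻¹ * n⁻¹ * m * n = s)
    (hcanon : ∀ n : G, σ n = 1 →
      ((∀ k : G, σ k = 1 → n * k = k * n) → st n = n) ∧
      ((¬ ∀ k : G, σ k = 1 → n * k = k * n) → st n = s * n)) :
    ∃ g₀ : G, σ g₀ = -1 ∧ (∀ n : G, σ n = 1 → g₀ * n = n * g₀) ∧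
      st g₀ = s * g₀ ∧ g₀ ∈ Subgroup.center G :=
  stmt_17_general h2 st hanti hinvol σ hhom hval hnt hker hnormal s hsN hs1 hs2 hNcomm hNcommS
    hcanon
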